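/- arXiv:2512.10854 — 13 statements merged into one kernel-verified Lean document; each statement's English description precedes it below -/
import Mathlib

section
/- Let P and Q be partially ordered sets and φ : P → Q a monotone function. Suppose Q can be partitioned into at most λ many subsets each containing no infinite strictly increasing sequence, and for every q ∈ Q the fiber φ⁻¹({q}) can also be so partitioned. Then P can be partitioned into at most λ (indeed λ×λ, which has cardinality λ for infinite λ) many subsets each containing no infinite strictly increasing sequence. -/
universe u

theorem stmt0 {P Q : Type u} [PartialOrder P] [PartialOrder Q]
    (φ : P → Q) (hφ : Monotone φ)
    (lam : Cardinal.{u}) (hlam : Cardinal.aleph0 ≤ lam)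
    (hQ : ∃ (I : Type u) (g : Q → I), Cardinal.mk I ≤ lam ∧
      ∀ i : I, ¬ ∃ s : ℕ → Q, StrictMono s ∧ ∀ n, g (s n) = i)
    (hfib : ∀ q : Q, ∃ (I : Type u) (g : {p : P // φ p = q} → I), Cardinal.mk I ≤ lam ∧
      ∀ i : I, ¬ ∃ s : ℕ → {p : P // φ p = q}, StrictMono s ∧ ∀ n, g (s n) = i) :
    ∃ (J : Type u) (h : P → J), Cardinal.mk J ≤ lam ∧
      ∀ j : J, ¬ ∃ s : ℕ → P, StrictMono s ∧ ∀ n, h (s n) = j := by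
  obtain ⟨I, g, hI, hIno⟩ := hQ
  choose I' g' hI' hno using hfib
  have hemb : ∀ q, Nonempty (I' q ↪ lam.out) := by
    intro q
    rw [← Cardinal.le_def, Cardinal.mk_out]
    exact hI' q
  have emb := fun q => (hemb q).some
  have key : ∀ (p : P) (q : Q) (hp : φ p = q),
      emb (φ p) (g' (φ p) ⟨p, rfl⟩) = emb q (g' q ⟨p, hp⟩) := by
    intro p q hp; subst hp; rfl
  refine ⟨I × lam.out, fun p => (g (φ p), emb (φ p) (g' (φ p) ⟨p, rfl⟩)), ?_, ?_⟩
  · have : Cardinal.mk (I × lam.out) = Cardinal.mk I * lam := by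
      rw [Cardinal.mk_prod]; simp [Cardinal.mk_out]
    rw [this]
    calc Cardinal.mk I * lam ≤ lam * lam := mul_le_mul_left hI lam
      _ = lam := Cardinal.mul_eq_self hlam
  · rintro ⟨i, x⟩ ⟨s, hs, hconst⟩
    have hg : ∀ n, g (φ (s n)) = i := fun n => congrArg Prod.fst (hconst n)
    have hx : ∀ n, emb (φ (s n)) (g' (φ (s n)) ⟨s n, rfl⟩) = x :=
      fun n => congrArg Prod.snd (hconst n)
    by_cases hc : ∃ N, ∀ n, N ≤ n → φ (s n) = φ (s N)
    · obtain ⟨N, hN⟩ := hc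
      set q := φ (s N) with hq
      have hval : ∀ k, emb q (g' q ⟨s (N + k), hN (N + k) (Nat.le_add_right N k)⟩) = x := by
        intro k
        rw [← key (s (N + k)) q (hN (N + k) (Nat.le_add_right N k))]
        exact hx (N + k)
      refine hno q (g' q ⟨s N, rfl⟩) ⟨fun k => ⟨s (N + k), hN (N + k) (Nat.le_add_right N k)⟩,
        ?_, ?_⟩
      · intro a b hab
        exact Subtype.mk_lt_mk.mpr (hs (by omega))
      · intro k
        apply (emb q).injective
        rw [hval k]
        have h0 := hval 0
        simpa using h0.symm
    · push_neg at hc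
      have hlt : ∀ N : ℕ, ∃ n, φ (s N) < φ (s n) := by
        intro N
        obtain ⟨n, hn, hne⟩ := hc N
        exact ⟨n, lt_of_le_of_ne (hφ (hs.monotone hn)) (Ne.symm hne)⟩
      let u : ℕ → ℕ := fun k => Nat.rec 0 (fun _ m => (hlt m).choose) k
      have hu : ∀ k, φ (s (u k)) < φ (s (u (k + 1))) := fun k => (hlt (u k)).choose_spec
      exact hIno i ⟨fun k => φ (s (u k)), strictMono_nat_of_lt_succ hu, fun k => hg (u k)⟩
end

section
/- For any cardinals κ and λ, the partially ordered set of subsets of κ of cardinality less than λ, ordered by inclusion, can be partitioned into at most 2^{<λ} many antichains; in particular it is 2^{<λ}-Noetherian. -/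
/-!
Fix a well-order of `X`. To a set `s` attach a labelled tree: the root is labelled by the order
type of `s`, and the children of `s` are obtained by deleting the maximum of `s` (if any) and
cutting the rest along a fixed fundamental sequence of its strict supremum `ssup s`, so they are
indexed by ordinals below `cof (ssup s) ≤ #s`. If `s ⊆ t` carry the same tree, equal order types
force `ssup s = ssup t`, hence every child of `s` lies inside the corresponding child of `t` and
carries the same tree; induction on `ssup` gives `s = t`. So the tree is a coloring whose colour
classes are antichains. When `#s ≤ ν` the tree has at most `ν` nonempty nodes, and their addresses
and labels are ordinals below `ν⁺`, so there are at most `(ν⁺)^ν = 2^ν` such trees and `2^{<λ}`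
over all `ν < λ`. When `λ ≤ ℵ₀` all sets are finite and the cardinality itself is such a coloring.
-/

universe u v

open Cardinal Set

noncomputable section

namespace Cardinal

lemma succ_power_le_two_power {ν : Cardinal.{u}} (hν : ℵ₀ ≤ ν) : Order.succ ν ^ ν ≤ 2 ^ ν :=
  calc Order.succ ν ^ ν ≤ (2 ^ ν) ^ ν := power_le_power_right (Order.succ_le_of_lt (cantor ν))
    _ = 2 ^ ν := by rw [← power_mul, mul_eq_self hν]

lemma le_two_powerlt (c : Cardinal.{u}) : c ≤ 2 ^< c := by
  by_contra! h
  exact (cantor _).not_ge (le_powerlt 2 h)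

end Cardinal

namespace Function

def supportGraph {α β : Type*} [Zero β] (f : α → β) : Set (α × β) :=
  {p | p.2 ≠ 0 ∧ f p.1 = p.2}

lemma supportGraph_injective {α β : Type*} [Zero β] :
    Injective (supportGraph : (α → β) → Set (α × β)) := by
  have key {f g : α → β} (h : supportGraph f = supportGraph g) (a : α) (ha : f a ≠ 0) :
      g a = f a := by
    have hmem : (a, f a) ∈ supportGraph g := h ▸ ⟨ha, rfl⟩
    exact hmem.2
  intro f g h
  funext a
  by_cases hg : g a = 0
  · by_contra hf
    rw [hg] at hf
    exact hf ((key h a hf).symm.trans hg)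
  · exact key h.symm a hg

end Function

open Function (supportGraph supportGraph_injective)

lemma Set.Finite.eq_of_subset_of_mk_eq {α : Type*} {s t : Set α} (ht : t.Finite) (hst : s ⊆ t)
    (h : #s = #t) : s = t :=
  ht.eq_of_subset_of_encard_le' hst (by rw [← toENat_cardinalMk, ← toENat_cardinalMk, h])

lemma exists_factor_of_lift_mk_range_le {α : Type*} {Z : Type v} (C : α → Z)
    {c : Cardinal.{u}} (h : lift.{u} #(range C) ≤ lift.{v} c) :
    ∃ (I : Type u) (f : α → I), #I ≤ c ∧ ∀ a b, f a = f b → C a = C b := by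
  obtain ⟨e⟩ : Nonempty (range C ↪ c.out) := lift_mk_le'.1 (by rwa [mk_out])
  exact ⟨c.out, fun a => e ⟨C a, mem_range_self a⟩, (mk_out c).le,
    fun a b hab => congrArg Subtype.val (e.injective hab)⟩

namespace Ordinal

def fundSeq (o : Ordinal.{u}) : Iio o.cof.ord → Iio o :=
  Classical.choose (exists_isFundamentalSeq rfl)

lemma isFundamentalSeq_fundSeq (o : Ordinal.{u}) : IsFundamentalSeq (fundSeq o) :=
  Classical.choose_spec (exists_isFundamentalSeq rfl)

-- Padding with `0` past `o.cof.ord` keeps every block index below `o.cof.ord`.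
def ladder (o i : Ordinal.{u}) : Ordinal.{u} :=
  if h : i < o.cof.ord then fundSeq o ⟨i, h⟩ else 0

lemma ladder_coe {o : Ordinal.{u}} (i : Iio o.cof.ord) : ladder o i = fundSeq o i :=
  dif_pos i.2

lemma ladder_lt {o : Ordinal.{u}} (ho : o ≠ 0) (i : Ordinal.{u}) : ladder o i < o := by
  unfold ladder
  split_ifs
  · exact Subtype.coe_prop _
  · exact pos_iff_ne_zero.2 ho

lemma exists_lt_ladder {o β : Ordinal.{u}} (h : β + 1 < o) : ∃ i, β < ladder o i := by
  obtain ⟨_, ⟨i, rfl⟩, hi⟩ := (isFundamentalSeq_fundSeq o).isCofinal_range ⟨β + 1, h⟩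
  exact ⟨i, (lt_add_one β).trans_le (ladder_coe i ▸ hi)⟩

def blockIdx (o β : Ordinal.{u}) : Ordinal.{u} := sInf {i | β < ladder o i}

lemma lt_ladder_blockIdx {o β : Ordinal.{u}} (h : β + 1 < o) : β < ladder o (blockIdx o β) :=
  csInf_mem (exists_lt_ladder h)

lemma blockIdx_lt_ord_cof {o β : Ordinal.{u}} (h : β + 1 < o) : blockIdx o β < o.cof.ord := by
  by_contra hi
  have := lt_ladder_blockIdx h
  rw [ladder, dif_neg hi] at this
  exact not_lt_zero this

end Ordinal

open Ordinal

namespace WellOrderTree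

variable {X : Type u} (r : X → X → Prop) [IsWellOrder X r]

def otp (s : Set X) : Ordinal.{u} := type (Subrel r (· ∈ s))

def ssup (s : Set X) : Ordinal.{u} := ⨆ x : s, typein r (x : X) + 1

variable {r}

lemma typein_lt_ssup {s : Set X} {x : X} (hx : x ∈ s) : typein r x < ssup r s :=
  Order.add_one_le_iff.1 (Ordinal.le_iSup (fun x : s => typein r (x : X) + 1) ⟨x, hx⟩)

lemma ssup_le_iff {s : Set X} {o : Ordinal.{u}} : ssup r s ≤ o ↔ ∀ x ∈ s, typein r x < o := by
  simp [ssup, Ordinal.iSup_le_iff, Order.add_one_le_iff]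

lemma exists_le_typein_of_lt_ssup {s : Set X} {o : Ordinal.{u}} (h : o < ssup r s) :
    ∃ x ∈ s, o ≤ typein r x := by
  simpa [ssup, Ordinal.lt_iSup_iff, Order.lt_add_one_iff] using h

lemma cof_ssup_le (s : Set X) : (ssup r s).cof ≤ #s := cof_iSup_add_one_le _

lemma ssup_mono {s t : Set X} (hst : s ⊆ t) : ssup r s ≤ ssup r t :=
  ssup_le_iff.2 fun _ hx => typein_lt_ssup (hst hx)

lemma card_otp (s : Set X) : (otp r s).card = #s := card_type _

lemma otp_eq_zero_iff {s : Set X} : otp r s = 0 ↔ s = ∅ := by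
  rw [otp, type_eq_zero_iff_isEmpty, isEmpty_coe_sort]

lemma otp_lt_otp {s t : Set X} (hst : s ⊆ t) {y : X} (hy : y ∈ t) (h : ∀ x ∈ s, r x y) :
    otp r s < otp r t := by
  have : otp r s ≤ typein (Subrel r (· ∈ t)) ⟨y, hy⟩ := by
    rw [otp, ← type_subrel, type_le_iff']
    refine ⟨⟨⟨fun x => ⟨⟨x.1, hst x.2⟩, h x.1 x.2⟩, fun a b hab => ?_⟩, Iff.rfl⟩⟩
    exact Subtype.ext (congrArg (fun z => z.1.1) hab)
  exact this.trans_lt (typein_lt_type _ _)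

lemma ssup_eq_of_otp_eq {s t : Set X} (hst : s ⊆ t) (h : otp r s = otp r t) :
    ssup r s = ssup r t := by
  refine (ssup_mono hst).antisymm (not_lt.1 fun hlt => h.not_lt ?_)
  obtain ⟨y, hy, hsy⟩ := exists_le_typein_of_lt_ssup hlt
  exact otp_lt_otp hst hy fun x hx => (typein_lt_typein r).1 ((typein_lt_ssup hx).trans_le hsy)

variable (r)

def child (s : Set X) (i : Ordinal.{u}) : Set X :=
  {x ∈ s | typein r x + 1 < ssup r s ∧ blockIdx (ssup r s) (typein r x) = i}

def descendant (s : Set X) (a : List Ordinal.{u}) : Set X := a.foldl (child r) s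

def otpTree (s : Set X) (a : List Ordinal.{u}) : Ordinal.{u} := otp r (descendant r s a)

variable {r}

lemma child_subset (s : Set X) (i : Ordinal.{u}) : child r s i ⊆ s := fun _ hx => hx.1

lemma child_mono {s t : Set X} (hst : s ⊆ t) (h : ssup r s = ssup r t) (i : Ordinal.{u}) :
    child r s i ⊆ child r t i := fun _ hx => ⟨hst hx.1, h ▸ hx.2⟩

lemma disjoint_child (s : Set X) {i j : Ordinal.{u}} (hij : i ≠ j) :
    Disjoint (child r s i) (child r s j) :=
  Set.disjoint_left.2 fun _ hi hj => hij (hi.2.2.symm.trans hj.2.2)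

lemma ssup_child_lt {s : Set X} (hs : s.Nonempty) (i : Ordinal.{u}) :
    ssup r (child r s i) < ssup r s := by
  obtain ⟨_, hx⟩ := hs
  refine (ssup_le_iff.2 fun y hy => ?_).trans_lt (ladder_lt (typein_lt_ssup hx).ne_bot i)
  exact hy.2.2 ▸ lt_ladder_blockIdx hy.2.1

lemma card_lt_of_child_nonempty {s : Set X} {i : Ordinal.{u}} (h : (child r s i).Nonempty) :
    i.card < #s := by
  obtain ⟨x, -, hx, rfl⟩ := h
  exact (lt_ord.1 (blockIdx_lt_ord_cof hx)).trans_le (cof_ssup_le s)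

theorem eq_of_subset_of_otpTree_eq {s t : Set X} (hst : s ⊆ t)
    (h : otpTree r s = otpTree r t) : s = t := by
  induction hτ : ssup r t using WellFoundedLT.induction generalizing s t with
  | _ τ IH =>
  rcases t.eq_empty_or_nonempty with rfl | ht
  · exact subset_empty_iff.1 hst
  have hssup : ssup r s = ssup r t := ssup_eq_of_otp_eq hst (congrFun h [])
  have hchild (i : Ordinal.{u}) : child r s i = child r t i :=
    IH _ (hτ ▸ ssup_child_lt ht i) (child_mono hst hssup i)
      (funext fun a => congrFun h (i :: a)) rfl
  refine hst.antisymm fun x hx => ?_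
  by_cases hlt : typein r x + 1 < ssup r t
  · have hxt : x ∈ child r t _ := ⟨hx, hlt, rfl⟩
    exact child_subset s _ ((hchild _).symm ▸ hxt)
  · -- `x` is the maximum of `t`, and `s` has the same strict supremum, so it contains `x`.
    obtain ⟨y, hy, hxy⟩ := exists_le_typein_of_lt_ssup (hssup ▸ typein_lt_ssup hx)
    have hyx : typein r y ≤ typein r x :=
      Order.lt_add_one_iff.1 ((hssup ▸ typein_lt_ssup hy).trans_le (not_lt.1 hlt))
    rwa [← typein_injective r (hyx.antisymm hxy)]

def boundedPairs (θ : Ordinal.{u}) : Set (List Ordinal.{u} × Ordinal.{u}) :=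
  {p | (∀ i ∈ p.1, i < θ) ∧ p.2 < θ}

lemma mk_boundedPairs_le {θ : Ordinal.{u}} (hθ : ℵ₀ ≤ θ.card) :
    #(boundedPairs θ) ≤ lift.{u+1} θ.card := by
  have hrange : boundedPairs θ ⊆
      range fun p : List (Iio θ) × Iio θ => (p.1.map Subtype.val, (p.2 : Ordinal.{u})) := by
    rintro ⟨a, o⟩ ⟨ha, ho⟩
    lift a to List (Iio θ) using ha
    exact ⟨(a, ⟨o, ho⟩), rfl⟩
  have hIio : #(Iio θ) = lift.{u+1} θ.card := Cardinal.mk_Iio_ordinal θ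
  have : Infinite (Iio θ) := infinite_iff.2 (hIio ▸ aleph0_le_lift.2 hθ)
  calc #(boundedPairs θ) ≤ #(List (Iio θ) × Iio θ) :=
        (mk_le_mk_of_subset hrange).trans mk_range_le
    _ = lift.{u+1} θ.card := by
      rw [mk_prod, Cardinal.lift_id, Cardinal.lift_id, mk_list_eq_mk, hIio,
        mul_eq_self (aleph0_le_lift.2 hθ)]

lemma descendant_subset (s : Set X) (a : List Ordinal.{u}) : descendant r s a ⊆ s := by
  induction a generalizing s with
  | nil => exact subset_rfl
  | cons i a ih => exact (ih _).trans (child_subset s i)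

lemma disjoint_descendant (s : Set X) {a b : List Ordinal.{u}} (hl : a.length = b.length)
    (hab : a ≠ b) : Disjoint (descendant r s a) (descendant r s b) := by
  induction a generalizing s b with
  | nil => exact absurd (List.length_eq_zero_iff.1 hl.symm).symm hab
  | cons i a ih =>
    obtain _ | ⟨j, b⟩ := b
    · simp at hl
    by_cases hij : i = j
    · subst hij
      exact ih (child r s i) (by simpa using hl) (by simpa using hab)
    · exact (disjoint_child s hij).mono (descendant_subset _ a) (descendant_subset _ b)

lemma card_lt_of_descendant_nonempty {s : Set X} {a : List Ordinal.{u}}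
    (h : (descendant r s a).Nonempty) {i : Ordinal.{u}} (hi : i ∈ a) : i.card < #s := by
  induction a generalizing s with
  | nil => simp at hi
  | cons j a ih =>
    have hj : (child r s j).Nonempty := h.mono (descendant_subset _ a)
    rcases List.mem_cons.1 hi with rfl | hi
    · exact card_lt_of_child_nonempty hj
    · exact (ih h hi).trans_le (mk_le_mk_of_subset (child_subset s j))

lemma supportGraph_otpTree_subset {s : Set X} {ν : Cardinal.{u}} (hs : #s ≤ ν) :
    supportGraph (otpTree r s) ⊆ boundedPairs (Order.succ ν).ord := by
  rintro ⟨a, o⟩ ⟨ho, h : otpTree r s a = o⟩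
  subst h
  have hne : (descendant r s a).Nonempty := nonempty_iff_ne_empty.2 (mt otp_eq_zero_iff.2 ho)
  refine ⟨fun i hi => lt_ord.2 ?_, lt_ord.2 ?_⟩
  · exact ((card_lt_of_descendant_nonempty hne hi).trans_le hs).trans (Order.lt_succ ν)
  · rw [otpTree, card_otp]
    exact ((mk_le_mk_of_subset (descendant_subset s a)).trans hs).trans_lt (Order.lt_succ ν)

lemma mk_supportGraph_otpTree_le (s : Set X) :
    #(supportGraph (otpTree r s)) ≤ lift.{u+1} (ℵ₀ * #s) := by
  have hne (p : supportGraph (otpTree r s)) : (descendant r s p.1.1).Nonempty :=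
    nonempty_iff_ne_empty.2 (mt otp_eq_zero_iff.2 (p.2.2 ▸ p.2.1))
  let F (p : supportGraph (otpTree r s)) : ULift.{u+1} (ℕ × s) :=
    ULift.up (p.1.1.length, ⟨(hne p).some, descendant_subset s _ (hne p).some_mem⟩)
  have hF : Function.Injective F := by
    rintro ⟨⟨a, o⟩, ha⟩ ⟨⟨b, o'⟩, hb⟩ h
    simp only [F, ULift.up_inj, Prod.mk.injEq, Subtype.mk.injEq] at h
    obtain rfl : a = b := by
      by_contra hab
      exact Set.disjoint_left.1 (disjoint_descendant s h.1 hab) (hne ⟨(a, o), ha⟩).some_mem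
        (h.2 ▸ (hne ⟨(b, o'), hb⟩).some_mem)
    exact Subtype.ext (Prod.ext rfl (ha.2.symm.trans hb.2))
  refine (mk_le_of_injective hF).trans_eq ?_
  simp [mk_prod]

lemma mk_image_otpTree_le {ν : Cardinal.{u}} (hν : ℵ₀ ≤ ν) :
    #(otpTree r '' {s : Set X | #s ≤ ν}) ≤ lift.{u+1} (2 ^ ν) := by
  set B := boundedPairs (Order.succ ν).ord
  have hgraph (f : otpTree r '' {s : Set X | #s ≤ ν}) :
      supportGraph f.1 ⊆ B ∧ #(supportGraph f.1) ≤ lift.{u+1} ν := by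
    obtain ⟨_, ⟨s, hs, rfl⟩⟩ := f
    refine ⟨supportGraph_otpTree_subset hs, (mk_supportGraph_otpTree_le s).trans (lift_le.2 ?_)⟩
    exact (mul_le_mul' hν hs).trans (mul_eq_self hν).le
  have hB : max #B ℵ₀ ≤ lift.{u+1} (Order.succ ν) := by
    have hsucc : ℵ₀ ≤ Order.succ ν := hν.trans (Order.le_succ ν)
    refine max_le ?_ (by rw [aleph0_le_lift]; exact hsucc)
    simpa using mk_boundedPairs_le (θ := (Order.succ ν).ord) (by simpa using hsucc)
  calc #(otpTree r '' {s : Set X | #s ≤ ν})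
      ≤ #{t : Set (List Ordinal.{u} × Ordinal.{u}) // t ⊆ B ∧ #t ≤ lift.{u+1} ν} :=
        mk_le_of_injective (f := fun f => ⟨supportGraph f.1, hgraph f⟩)
          fun f g h => Subtype.ext (supportGraph_injective (congrArg Subtype.val h))
    _ ≤ max #B ℵ₀ ^ lift.{u+1} ν := mk_bounded_subset_le _ _
    _ ≤ lift.{u+1} (Order.succ ν ^ ν) := by
        rw [lift_power]; exact power_le_power_right hB
    _ ≤ lift.{u+1} (2 ^ ν) := lift_le.2 (succ_power_le_two_power hν)

lemma mk_range_otpTree_le {lam : Cardinal.{u}} (hlam : ℵ₀ < lam) :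
    #(range fun s : {s : Set X // #s < lam} => otpTree r s.1) ≤ lift.{u+1} (2 ^< lam) := by
  have hcover : (range fun s : {s : Set X // #s < lam} => otpTree r s.1) ⊆
      ⋃ o : Iio lam.ord, otpTree r '' {s | #s ≤ o.1.card ⊔ ℵ₀} := by
    rintro _ ⟨s, rfl⟩
    exact mem_iUnion.2 ⟨⟨(#s.1).ord, ord_lt_ord.2 s.2⟩, s.1, by simp, rfl⟩
  have hclass (o : Iio lam.ord) :
      #(otpTree r '' {s | #s ≤ o.1.card ⊔ ℵ₀}) ≤ lift.{u+1} (2 ^< lam) :=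
    (mk_image_otpTree_le le_sup_right).trans
      (lift_le.2 (le_powerlt 2 (max_lt (lt_ord.1 o.2) hlam)))
  have hpow : ℵ₀ ≤ 2 ^< lam := hlam.le.trans (le_two_powerlt lam)
  calc _ ≤ #(Iio lam.ord) * ⨆ o : Iio lam.ord, #(otpTree r '' {s | #s ≤ o.1.card ⊔ ℵ₀}) :=
        (mk_le_mk_of_subset hcover).trans (mk_iUnion_le _)
    _ ≤ lift.{u+1} lam * lift.{u+1} (2 ^< lam) := by
        rw [Cardinal.mk_Iio_ordinal, card_ord]; exact mul_le_mul' le_rfl (ciSup_le' hclass)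
    _ = lift.{u+1} (2 ^< lam) := by
        rw [← Cardinal.lift_mul, mul_eq_right hpow (le_two_powerlt lam) (aleph0_pos.trans hlam).ne']

end WellOrderTree

theorem exists_antichain_coloring (X : Type u) (lam : Cardinal.{u}) :
    ∃ (I : Type u) (f : {s : Set X // #s < lam} → I),
      #I ≤ 2 ^< lam ∧ ∀ s t, f s = f t → s.1 ⊆ t.1 → s = t := by
  suffices ∃ (Z : Type (u+1)) (C : {s : Set X // #s < lam} → Z),
      #(range C) ≤ lift.{u+1} (2 ^< lam) ∧ ∀ s t, C s = C t → s.1 ⊆ t.1 → s = t by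
    obtain ⟨Z, C, hC, hsep⟩ := this
    obtain ⟨I, f, hI, hfC⟩ :=
      exists_factor_of_lift_mk_range_le C (c := 2 ^< lam) (by rwa [Cardinal.lift_id'.{u, u+1}])
    exact ⟨I, f, hI, fun s t h => hsep s t (hfC s t h)⟩
  rcases le_or_gt lam ℵ₀ with hlam | hlam
  · refine ⟨Ordinal, fun s => (#s.1).ord, ?_, fun s t h hst => ?_⟩
    · calc _ ≤ #(Iio lam.ord) := mk_le_mk_of_subset (by rintro _ ⟨s, rfl⟩; exact ord_lt_ord.2 s.2)
        _ ≤ lift.{u+1} (2 ^< lam) := by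
          rw [Cardinal.mk_Iio_ordinal, card_ord]; exact lift_le.2 (le_two_powerlt lam)
    · exact Subtype.ext ((lt_aleph0_iff_set_finite.1 (t.2.trans_le hlam)).eq_of_subset_of_mk_eq
        hst (ord_injective h))
  · let r : X → X → Prop := WellOrderingRel
    exact ⟨_, fun s => WellOrderTree.otpTree r s.1, WellOrderTree.mk_range_otpTree_le hlam,
      fun s t h hst => Subtype.ext (WellOrderTree.eq_of_subset_of_otpTree_eq hst h)⟩

/-- The poset `[κ]^{<λ}` of subsets of `κ` of cardinality `< λ`, ordered by `⊆`,
can be partitioned into at most `2^{<λ}` antichains; in particular it is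
`2^{<λ}`-Noetherian. -/
theorem stmt1 (κ lam : Cardinal.{u}) :
    ∃ (I : Type u) (f : {s : Set (Quotient.out κ) // Cardinal.mk ↥s < lam} → I),
      Cardinal.mk I ≤ 2 ^< lam ∧
      (∀ s t, f s = f t → s.1 ⊆ t.1 → s = t) ∧
      (∀ i : I, ¬ ∃ c : ℕ → {s : Set (Quotient.out κ) // Cardinal.mk ↥s < lam},
        (∀ n, f (c n) = i) ∧ ∀ n, (c n).1 ⊂ (c (n+1)).1) := by
  obtain ⟨I, f, hI, hf⟩ := exists_antichain_coloring (Quotient.out κ) lam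
  refine ⟨I, f, hI, hf, fun i ⟨c, hc, hchain⟩ => (hchain 0).ne ?_⟩
  exact congrArg Subtype.val (hf _ _ ((hc 0).trans (hc 1).symm) (hchain 0).subset)
end
end

section
/- If Y is a subspace of a topological space X and the subspace Y has a Noetherian base (a base for its topology containing no infinite strictly ⊆-increasing sequence), then Y admits a Noetherian outer base in X, i.e., a family B of open subsets of X, containing no infinite strictly ⊆-increasing sequence, such that for every p ∈ Y the sets in B containing p form a neighborhood base of p in X. -/
/-!
For each basic open set `b` of `Y`, the open sets `G` of `X` with `G ∩ Y = b` form a family that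
is nonempty and cofinal downwards among open neighbourhoods of `b`; every family of sets has a
coinitial Noetherian subfamily, so pick one in each of these families and take their union. The
union is Noetherian: along a strictly increasing chain the traces on `Y` increase inside the
Noetherian base, hence are eventually constant, and then the chain lies in a single Noetherian
subfamily.
-/

universe u

/-- A family of sets is Noetherian iff it contains no infinite strictly
`⊆`-increasing sequence. -/
def NoetherianFamily {α : Type u} (B : Set (Set α)) : Prop :=
  ¬ ∃ f : ℕ → Set α, (∀ n, f n ∈ B) ∧ StrictMono f

open Set Topology

theorem noetherianFamily_iff_wellFoundedOn_gt {α : Type u} {B : Set (Set α)} :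
    NoetherianFamily B ↔ B.WellFoundedOn (· > ·) := by
  rw [wellFoundedOn_iff_no_descending_seq, NoetherianFamily, not_exists]
  exact ⟨fun h f hf => h f ⟨hf, fun m n hmn => f.map_rel_iff.2 hmn⟩,
    fun h f ⟨hf, hmono⟩ => h ⟨⟨f, hmono.injective⟩, hmono.lt_iff_lt⟩ hf⟩

/-- Keep the members of `S` that precede, in a fixed well-order of `α`, everything of `S` below
them: a strictly increasing chain of such members descends in the well-order. -/
theorem exists_coinitial_subset_wellFoundedOn_gt {α : Type*} [PartialOrder α] (S : Set α) :
    ∃ T ⊆ S, (∀ x ∈ S, ∃ y ∈ T, y ≤ x) ∧ T.WellFoundedOn (· > ·) := by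
  have wf : WellFounded (WellOrderingRel : α → α → Prop) := WellOrderingRel.isWellOrder.wf
  set T := {y ∈ S | ∀ z ∈ S, z ≤ y → ¬ WellOrderingRel z y}
  refine ⟨T, sep_subset _ _, fun x hx => ?_, ?_⟩
  · have hne : (S ∩ Iic x).Nonempty := ⟨x, hx, le_rfl⟩
    obtain ⟨hyS, hyx⟩ := wf.min_mem _ hne
    exact ⟨wf.min _ hne,
      ⟨hyS, fun z hzS hzy => wf.not_lt_min (S ∩ Iic x) (x := z) ⟨hzS, hzy.trans hyx⟩⟩, hyx⟩
  · refine wf.wellFoundedOn.mono' fun y' hy' y hy hlt => ?_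
    rcases trichotomous_of WellOrderingRel y y' with h | h | h
    · exact absurd h (hy'.2 y hy.1 hlt.le)
    · exact absurd h hlt.ne
    · exact h

theorem Set.WellFoundedOn.of_monotone_of_fiber {α β : Type*} [Preorder α] [PartialOrder β]
    {φ : α → β} (hφ : Monotone φ) {S : Set α} (himage : (φ '' S).WellFoundedOn (· > ·))
    (hfiber : ∀ b, (S ∩ φ ⁻¹' {b}).WellFoundedOn (· > ·)) : S.WellFoundedOn (· > ·) := by
  refine (WellFoundedOn.prod_lex_of_wellFoundedOn_fiber (rβ := (· > ·)) (g := id)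
    (wellFoundedOn_image.1 himage) hfiber).mono' fun a _ b _ hab => ?_
  rcases (hφ hab.le).lt_or_eq with h | h
  · exact Prod.Lex.left _ _ h
  · simp only [Function.onFun, h]
    exact Prod.Lex.right _ hab

theorem Topology.IsInducing.exists_isOpen_preimage_eq_subset {Y X : Type*} [TopologicalSpace Y]
    [TopologicalSpace X] {f : Y → X} (hf : IsInducing f) {b : Set Y} (hb : IsOpen b) {U : Set X}
    (hU : IsOpen U) (hbU : b ⊆ f ⁻¹' U) : ∃ G, IsOpen G ∧ f ⁻¹' G = b ∧ G ⊆ U := by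
  obtain ⟨W, hW, rfl⟩ := hf.isOpen_iff.1 hb
  exact ⟨W ∩ U, hW.inter hU, by rwa [preimage_inter, inter_eq_left], inter_subset_right⟩

/-- If a subspace `Y` of `X` has a Noetherian base, then `Y` admits a Noetherian
outer base in `X`. -/
theorem stmt2 {X : Type u} [TopologicalSpace X] (Y : Set X)
    (hY : ∃ B : Set (Set Y), TopologicalSpace.IsTopologicalBasis B ∧ NoetherianFamily B) :
    ∃ B : Set (Set X), (∀ G ∈ B, IsOpen G) ∧
      (∀ p ∈ Y, ∀ U : Set X, IsOpen U → p ∈ U → ∃ G ∈ B, p ∈ G ∧ G ⊆ U) ∧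
      NoetherianFamily B := by
  obtain ⟨B, hB, hBwf⟩ := hY
  choose F hFS hFcoinitial hFwf using fun b : Set Y =>
    exists_coinitial_subset_wellFoundedOn_gt {G : Set X | IsOpen G ∧ (↑) ⁻¹' G = b}
  have hFtrace : ∀ b, ∀ G ∈ F b, (↑) ⁻¹' G = b := fun b G hG => (hFS b hG).2
  refine ⟨⋃ b ∈ B, F b, fun G hG => ?_, fun p hp U hU hpU => ?_, ?_⟩
  · obtain ⟨b, -, hG⟩ := mem_iUnion₂.1 hG
    exact (hFS b hG).1
  · obtain ⟨b, hb, hpb, hbU⟩ := hB.exists_subset_of_mem_open (a := ⟨p, hp⟩) hpU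
      (hU.preimage continuous_subtype_val)
    obtain ⟨W, hW, hWb, hWU⟩ :=
      IsInducing.subtypeVal.exists_isOpen_preimage_eq_subset (hB.isOpen hb) hU hbU
    obtain ⟨G, hG, hGW⟩ := hFcoinitial b W ⟨hW, hWb⟩
    refine ⟨G, mem_biUnion hb hG, ?_, hGW.trans hWU⟩
    rwa [← hFtrace b G hG] at hpb
  · rw [noetherianFamily_iff_wellFoundedOn_gt] at hBwf ⊢
    refine WellFoundedOn.of_monotone_of_fiber (φ := preimage ((↑) : Y → X))
      (fun _ _ => preimage_mono) (hBwf.subset ?_) fun b => (hFwf b).subset ?_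
    · rintro _ ⟨G, hG, rfl⟩
      obtain ⟨b, hb, hG⟩ := mem_iUnion₂.1 hG
      rwa [hFtrace b G hG]
    · rintro G ⟨hG, rfl : _ = b⟩
      obtain ⟨b, -, hG⟩ := mem_iUnion₂.1 hG
      rwa [hFtrace b G hG]
end

section
/- Every point p of a topological space X has a Noetherian neighborhood base: a family B of open sets each containing p, with no infinite strictly ⊆-increasing sequence, such that every open set containing p contains some member of B. -/
/-!
Fix a well-order `r` on all subsets of `X` and keep the open neighbourhoods `U` of `p` that are
the `r`-least among the open neighbourhoods contained in `U`. Every open neighbourhood `U`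
contains such a set, namely the `r`-least open neighbourhood inside `U`; and along a strictly
`⊆`-increasing chain of kept sets the order `r` strictly decreases, which the well-order forbids.
-/

universe u

section LeastBelowSelf

variable {α : Type u} (r : Set α → Set α → Prop) (N : Set (Set α))

def leastBelowSelf : Set (Set α) :=
  {U ∈ N | ∀ V ∈ N, V ⊂ U → r U V}

lemma exists_mem_leastBelowSelf_subset [IsWellOrder (Set α) r] {U : Set α} (hU : U ∈ N) :
    ∃ G ∈ leastBelowSelf r N, G ⊆ U := by
  set S := {V ∈ N | V ⊆ U}
  have hne : S.Nonempty := ⟨U, hU, subset_rfl⟩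
  set G := IsWellFounded.wf.min (r := r) S hne
  obtain ⟨hGN, hGU⟩ : G ∈ N ∧ G ⊆ U := IsWellFounded.wf.min_mem S hne
  refine ⟨G, ⟨hGN, fun V hVN hVG => ?_⟩, hGU⟩
  have hV_not_lt : ¬ r V G := IsWellFounded.wf.not_lt_min S ⟨hVN, hVG.subset.trans hGU⟩
  rcases trichotomous_of r G V with h | rfl | h
  · exact h
  · exact absurd hVG (ssubset_irrefl _)
  · exact absurd h hV_not_lt

lemma noetherianFamily_leastBelowSelf [IsWellFounded (Set α) r] :
    NoetherianFamily (leastBelowSelf r N) := by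
  rintro ⟨f, hfB, hf⟩
  obtain ⟨n, hn⟩ := WellFounded.not_rel_apply_succ (r := r) f
  exact hn ((hfB (n + 1)).2 (f n) (hfB n).1 (hf n.lt_succ_self))

end LeastBelowSelf

lemma exists_noetherianFamily_coinitial_subset {α : Type u} (N : Set (Set α)) :
    ∃ B ⊆ N, (∀ U ∈ N, ∃ G ∈ B, G ⊆ U) ∧ NoetherianFamily B :=
  ⟨leastBelowSelf WellOrderingRel N, fun _ hU => hU.1,
    fun _ hU => exists_mem_leastBelowSelf_subset _ N hU, noetherianFamily_leastBelowSelf _ N⟩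

/-- Every point of a topological space has a Noetherian neighborhood base. -/
theorem stmt3 {X : Type u} [TopologicalSpace X] (p : X) :
    ∃ B : Set (Set X), (∀ G ∈ B, IsOpen G ∧ p ∈ G) ∧
      (∀ U : Set X, IsOpen U → p ∈ U → ∃ G ∈ B, G ⊆ U) ∧
      NoetherianFamily B := by
  obtain ⟨B, hBN, hB_coinitial, hB⟩ :=
    exists_noetherianFamily_coinitial_subset {U : Set X | IsOpen U ∧ p ∈ U}
  exact ⟨B, fun G hG => hBN hG, fun U hU hpU => hB_coinitial U ⟨hU, hpU⟩, hB⟩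
end

section
/- If Y and Z are subsets of a topological space X each admitting a Noetherian outer base in X, then Y ∪ Z admits a Noetherian outer base in X. -/
universe u

/-- `B` is an outer base of `Y` in `X`. -/
def IsOuterBase {X : Type u} [TopologicalSpace X] (Y : Set X) (B : Set (Set X)) : Prop :=
  (∀ G ∈ B, IsOpen G) ∧
    ∀ p ∈ Y, ∀ U : Set X, IsOpen U → p ∈ U → ∃ G ∈ B, p ∈ G ∧ G ⊆ U

namespace NoetherianFamily

variable {α : Type u} {B B₁ B₂ : Set (Set α)}

theorem finite_setOf_mem (hB : NoetherianFamily B) {f : ℕ → Set α} (hf : StrictMono f) :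
    {n | f n ∈ B}.Finite := by
  by_contra hinf
  exact hB ⟨f ∘ Nat.nth (· ∈ {n | f n ∈ B}), fun n => Nat.nth_mem_of_infinite hinf n,
    hf.comp (Nat.nth_strictMono hinf)⟩

theorem union (h₁ : NoetherianFamily B₁) (h₂ : NoetherianFamily B₂) :
    NoetherianFamily (B₁ ∪ B₂) := by
  rintro ⟨f, hmem, hf⟩
  have hcover : {n | f n ∈ B₁} ∪ {n | f n ∈ B₂} = Set.univ :=
    Set.eq_univ_of_forall hmem
  exact Set.infinite_univ (hcover ▸ (h₁.finite_setOf_mem hf).union (h₂.finite_setOf_mem hf))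

end NoetherianFamily

theorem IsOuterBase.union {X : Type u} [TopologicalSpace X] {Y Z : Set X} {B₁ B₂ : Set (Set X)}
    (h₁ : IsOuterBase Y B₁) (h₂ : IsOuterBase Z B₂) : IsOuterBase (Y ∪ Z) (B₁ ∪ B₂) := by
  refine ⟨fun G hG => hG.elim (h₁.1 G) (h₂.1 G), ?_⟩
  rintro p (hp | hp) U hU hpU
  · obtain ⟨G, hG, hpG⟩ := h₁.2 p hp U hU hpU
    exact ⟨G, Or.inl hG, hpG⟩
  · obtain ⟨G, hG, hpG⟩ := h₂.2 p hp U hU hpU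
    exact ⟨G, Or.inr hG, hpG⟩

/-- If `Y` and `Z` admit Noetherian outer bases in `X`, then so does `Y ∪ Z`. -/
theorem stmt4 {X : Type u} [TopologicalSpace X] (Y Z : Set X)
    (hY : ∃ B : Set (Set X), IsOuterBase Y B ∧ NoetherianFamily B)
    (hZ : ∃ B : Set (Set X), IsOuterBase Z B ∧ NoetherianFamily B) :
    ∃ B : Set (Set X), IsOuterBase (Y ∪ Z) B ∧ NoetherianFamily B := by
  obtain ⟨B₁, hB₁, hN₁⟩ := hY
  obtain ⟨B₂, hB₂, hN₂⟩ := hZ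
  exact ⟨B₁ ∪ B₂, hB₁.union hB₂, hN₁.union hN₂⟩
end

section
/- Every discrete subset of a topological space X admits a Noetherian outer base in X. -/
universe u

/-- Every discrete subset of a topological space admits a Noetherian outer base. -/
theorem stmt5 {X : Type u} [TopologicalSpace X] (D : Set X)
    (hD : ∀ p ∈ D, ∃ U : Set X, IsOpen U ∧ U ∩ D = {p}) :
    ∃ B : Set (Set X), IsOuterBase D B ∧ NoetherianFamily B := by
  classical
  choose! U hUo hUD using hD
  have hpU : ∀ p ∈ D, p ∈ U p := by
    intro p hp
    have h : p ∈ U p ∩ D := by rw [hUD p hp]; exact rfl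
    exact h.1
  have huniq : ∀ p ∈ D, ∀ q ∈ D, q ∈ U p → q = p := by
    intro p hp q hq hqU
    have h : q ∈ U p ∩ D := ⟨hqU, hq⟩
    rwa [hUD p hp] at h
  let r : Set X → Set X → Prop := WellOrderingRel
  have wf : WellFounded r := (IsWellFounded.wf)
  let B : Set (Set X) := {G | IsOpen G ∧ ∃ p ∈ D, p ∈ G ∧ G ⊆ U p ∧
    ∀ G' : Set X, IsOpen G' → p ∈ G' → G' ⊂ G → ¬ r G' G}
  refine ⟨B, ⟨fun G hG => hG.1, ?_⟩, ?_⟩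
  · intro p hp V hV hpV
    set F : Set (Set X) := {G | IsOpen G ∧ p ∈ G ∧ G ⊆ U p ∧ G ⊆ V} with hF
    have hne : F.Nonempty :=
      ⟨U p ∩ V, (hUo p hp).inter hV, ⟨hpU p hp, hpV⟩,
        Set.inter_subset_left, Set.inter_subset_right⟩
    obtain ⟨G, hGF, hGmin⟩ := wf.has_min F hne
    refine ⟨G, ⟨hGF.1, p, hp, hGF.2.1, hGF.2.2.1, ?_⟩, hGF.2.1, hGF.2.2.2⟩
    intro G' hG'o hpG' hss hr
    exact hGmin G' ⟨hG'o, hpG', hss.1.trans hGF.2.2.1, hss.1.trans hGF.2.2.2⟩ hr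
  · rintro ⟨f, hfB, hmono⟩
    choose p hpD hpf hfU hmin using fun n => (hfB n).2
    -- all witnesses are equal
    have hpeq : ∀ n, p (n + 1) = p n := by
      intro n
      have h1 : p n ∈ U (p (n + 1)) := (hfU (n + 1)) ((hmono (Nat.lt_succ_self n)).1 (hpf n))
      exact (huniq (p (n + 1)) (hpD (n + 1)) (p n) (hpD n) h1).symm
    have hpall : ∀ n, p n = p 0 := by
      intro n; induction n with
      | zero => rfl
      | succ k ih => rw [hpeq k, ih]
    -- descending r-chain
    have hdesc : ∀ n, r (f (n + 1)) (f n) := by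
      intro n
      have hss : f n ⊂ f (n + 1) := hmono (Nat.lt_succ_self n)
      have hpf' : p (n + 1) ∈ f n := by rw [hpeq n]; exact hpf n
      have hnr : ¬ r (f n) (f (n + 1)) :=
        hmin (n + 1) (f n) (hfB n).1 hpf' hss
      rcases trichotomous_of r (f (n + 1)) (f n) with h | h | h
      · exact h
      · exact absurd h.symm hss.ne
      · exact absurd h hnr
    obtain ⟨a, ⟨m, rfl⟩, hamin⟩ := wf.has_min (Set.range f) ⟨f 0, 0, rfl⟩
    exact hamin (f (m + 1)) ⟨m + 1, rfl⟩ (hdesc m)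
end

section
/- If a topological space X is the disjoint union of a family of open subsets each of which has a Noetherian base, then X has a Noetherian base. -/
universe u v

/-- If `X` is the disjoint union of open subsets, each of which has a Noetherian
base (as a subspace), then `X` has a Noetherian base. -/
theorem stmt6 {X : Type u} [TopologicalSpace X] {ι : Type v} (U : ι → Set X)
    (hopen : ∀ i, IsOpen (U i))
    (hdisj : Pairwise (Function.onFun Disjoint U))
    (hcov : ⋃ i, U i = Set.univ)
    (hbase : ∀ i, ∃ B : Set (Set (U i)),
      TopologicalSpace.IsTopologicalBasis B ∧ NoetherianFamily B) :
    ∃ B : Set (Set X), TopologicalSpace.IsTopologicalBasis B ∧ NoetherianFamily B := by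
  choose B hBbasis hBnoeth using hbase
  refine ⟨⋃ i, (Set.image (Subtype.val : U i → X)) '' B i, ?_, ?_⟩
  · exact TopologicalSpace.isTopologicalBasis_of_cover hopen hcov hBbasis
  · rintro ⟨f, hf, hmono⟩
    have hex : ∀ n, ∃ i, ∃ b ∈ B i, f n = Subtype.val '' b := by
      intro n
      have := hf n
      simp only [Set.mem_iUnion, Set.mem_image] at this
      obtain ⟨i, b, hb, hfb⟩ := this
      exact ⟨i, b, hb, hfb.symm⟩
    choose idx b hb hfb using hex
    have hsub : ∀ n, f n ⊆ U (idx n) := by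
      intro n
      rw [hfb n]
      rintro x ⟨y, -, rfl⟩
      exact y.2
    obtain ⟨x0, hx0, -⟩ := Set.exists_of_ssubset (hmono (show 0 < 1 by norm_num))
    have hnon : ∀ n, (f (n + 1)).Nonempty := fun n =>
      ⟨x0, hmono.monotone (Nat.succ_le_succ (Nat.zero_le n)) hx0⟩
    have hidx : ∀ n, idx (n + 1) = idx 1 := by
      intro n
      induction n with
      | zero => rfl
      | succ m ih =>
        have hne : (U (idx (m + 1)) ∩ U (idx (m + 2))).Nonempty := by
          obtain ⟨y, hy⟩ := hnon m
          exact ⟨y, hsub _ hy, hsub _ (hmono.monotone (by omega) hy)⟩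
        have heq : idx (m + 1) = idx (m + 2) := by
          by_contra h
          exact hne.not_subset_empty ((hdisj h).inter_eq ▸ subset_rfl)
        exact heq ▸ ih
    have key : ∀ i j (h : i = j) (c : Set (U i)), c ∈ B i →
        ((Subtype.val : U j → X) ⁻¹' (Subtype.val '' c)) ∈ B j := by
      rintro i _ rfl c hc
      rwa [Set.preimage_image_eq _ Subtype.val_injective]
    set j := idx 1 with hj
    refine hBnoeth j ⟨fun n => (Subtype.val : U j → X) ⁻¹' f (n + 1), ?_, ?_⟩
    · intro n
      show Subtype.val ⁻¹' f (n + 1) ∈ B j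
      rw [hfb (n + 1)]
      exact key _ _ (hidx n) _ (hb (n + 1))
    · intro n m hnm
      have hss := hmono (Nat.succ_lt_succ hnm)
      obtain ⟨x, hxm, hxn⟩ := Set.exists_of_ssubset hss
      have hxU : x ∈ U j := (hidx m) ▸ hsub (m + 1) hxm
      refine lt_iff_le_not_ge.mpr ⟨fun y hy => hss.le hy, fun h => ?_⟩
      exact hxn (h (show (⟨x, hxU⟩ : U j) ∈ _ from hxm))
end

section
/- Every metric space has a Noetherian base. -/
universe u

open Metric Set

/-- Maximal `r`-separated sets exist (Zorn). -/
lemma exists_maximal_sep {X : Type u} [MetricSpace X] {r : ℝ} (hr : 0 < r) :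
    ∃ D : Set X, (D.Pairwise fun x y => r ≤ dist x y) ∧ ∀ p : X, ∃ x ∈ D, dist p x < r := by
  have hchaincond : ∀ c ⊆ {D : Set X | D.Pairwise fun x y => r ≤ dist x y},
      IsChain (· ⊆ ·) c → ∃ ub ∈ {D : Set X | D.Pairwise fun x y => r ≤ dist x y},
        ∀ s ∈ c, s ⊆ ub := by
    intro c hc hchain
    refine ⟨⋃₀ c, ?_, fun s hs => Set.subset_sUnion_of_mem hs⟩
    intro a ha b hb hab
    obtain ⟨s, hs, has⟩ := ha
    obtain ⟨t, ht, hbt⟩ := hb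
    rcases hchain.total hs ht with hst | hts
    · exact (hc ht) (hst has) hbt hab
    · exact (hc hs) has (hts hbt) hab
  obtain ⟨D, hD⟩ := zorn_subset {D : Set X | D.Pairwise fun x y => r ≤ dist x y} hchaincond
  · refine ⟨D, hD.prop, fun p => ?_⟩
    by_contra h
    push_neg at h
    have hp : p ∈ D := by
      have hmem : insert p D ∈ {D : Set X | D.Pairwise fun x y => r ≤ dist x y} := by
        intro a ha b hb hab
        rw [Set.mem_insert_iff] at ha hb
        rcases ha with rfl | ha
        · rcases hb with rfl | hb
          · exact absurd rfl hab
          · exact h b hb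
        · rcases hb with rfl | hb
          · simpa [dist_comm] using h a ha
          · exact hD.prop ha hb hab
      have := hD.eq_of_subset hmem (Set.subset_insert p D)
      rw [this]
      exact Set.mem_insert _ _
    exact absurd (by simpa using h p hp) hr.not_ge

/-- Every metric space has a Noetherian base. -/
theorem stmt7 {X : Type u} [MetricSpace X] :
    ∃ B : Set (Set X), TopologicalSpace.IsTopologicalBasis B ∧ NoetherianFamily B := by
  have hrpos : ∀ n : ℕ, (0:ℝ) < (1/2)^n := fun n => by positivity
  choose D hDsep hDnet using fun n : ℕ => exists_maximal_sep (X := X) (hrpos n)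
  refine ⟨⋃ n : ℕ, (fun x => Metric.ball x ((1/2)^n)) '' D n, ?_, ?_⟩
  · apply TopologicalSpace.isTopologicalBasis_of_isOpen_of_nhds
    · rintro u hu
      obtain ⟨n, hmem⟩ := Set.mem_iUnion.1 hu
      obtain ⟨x, hx, rfl⟩ := hmem
      exact Metric.isOpen_ball
    · intro p u hpu hu
      obtain ⟨ε, hε, hball⟩ := Metric.isOpen_iff.1 hu p hpu
      obtain ⟨n, hn⟩ := exists_pow_lt_of_lt_one (half_pos hε) (by norm_num : (1:ℝ)/2 < 1)
      obtain ⟨x, hx, hdx⟩ := hDnet n p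
      refine ⟨Metric.ball x ((1/2)^n), ?_, by simpa [dist_comm] using hdx, ?_⟩
      · exact Set.mem_iUnion.2 ⟨n, Set.mem_image_of_mem _ hx⟩
      · intro z hz
        apply hball
        have : dist z p ≤ dist z x + dist x p := dist_triangle z x p
        have hzx : dist z x < (1/2)^n := hz
        have hxp : dist x p < (1/2)^n := by rwa [dist_comm] at hdx
        have : dist z p < (1/2)^n + (1/2)^n := lt_of_le_of_lt this (add_lt_add hzx hxp)
        have h2 : (1/2:ℝ)^n + (1/2)^n < ε := by linarith
        exact Metric.mem_ball.2 (this.trans h2)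
  · rintro ⟨f, hf, hmono⟩
    -- extract centers and radii
    have hdata : ∀ i, ∃ k : ℕ, ∃ x ∈ D k, f i = Metric.ball x ((1/2)^k) := by
      intro i
      obtain ⟨n, hmem⟩ := Set.mem_iUnion.1 (hf i)
      obtain ⟨x, hx, h⟩ := hmem
      exact ⟨n, x, hx, h.symm⟩
    choose k x hx hfx using hdata
    -- radii indices are antitone
    have hanti : ∀ i, k (i+1) ≤ k i := by
      intro i
      by_contra hlt
      push_neg at hlt
      have hss : f i ⊂ f (i+1) := hmono (Nat.lt_succ_self i)
      obtain ⟨z, hz1, hz2⟩ := Set.exists_of_ssubset hss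
      rw [hfx] at hz1 hz2
      have hzc : dist z (x (i+1)) < (1/2)^(k (i+1)) := hz1
      have hznot : (1/2:ℝ)^(k i) ≤ dist z (x i) := le_of_not_gt hz2
      have hxi : x i ∈ f i := by rw [hfx]; exact Metric.mem_ball_self (hrpos _)
      have hxi' : dist (x i) (x (i+1)) < (1/2)^(k (i+1)) := by
        have := hss.subset hxi
        rw [hfx] at this; exact this
      have htri : dist z (x i) ≤ dist z (x (i+1)) + dist (x (i+1)) (x i) :=
        dist_triangle _ _ _
      have hbig : dist z (x i) < 2 * (1/2)^(k (i+1)) := by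
        rw [dist_comm (x (i+1)) (x i)] at htri
        linarith
      have hpow : 2 * (1/2:ℝ)^(k (i+1)) ≤ (1/2)^(k i) := by
        have : k i + 1 ≤ k (i+1) := hlt
        have hle : (1/2:ℝ)^(k (i+1)) ≤ (1/2)^(k i + 1) :=
          pow_le_pow_of_le_one (by norm_num) (by norm_num) this
        rw [pow_succ] at hle
        linarith
      linarith
    -- k is antitone, so attains a minimum
    obtain ⟨N, hN⟩ : ∃ N, ∀ m, k N ≤ k m := by
      obtain ⟨_, ⟨N, rfl⟩, hmin⟩ :=
        (wellFounded_lt (α := ℕ)).has_min (Set.range k) (Set.range_nonempty k)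
      exact ⟨N, fun m => not_lt.1 (hmin _ ⟨m, rfl⟩)⟩
    have heq : k (N+1) = k N := le_antisymm (hanti N) (hN (N+1))
    -- two distinct balls of equal radius with close centers: contradiction with separation
    have hss : f N ⊂ f (N+1) := hmono (Nat.lt_succ_self N)
    have hxN : x N ∈ f (N+1) := by
      apply hss.subset
      rw [hfx]; exact Metric.mem_ball_self (hrpos _)
    rw [hfx] at hxN
    have hdist : dist (x N) (x (N+1)) < (1/2)^(k N) := by rw [← heq]; exact hxN
    have hxN1 : x (N+1) ∈ D (k N) := by rw [← heq]; exact hx (N+1)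
    have : x N = x (N+1) := by
      by_contra hne
      exact absurd hdist (not_lt.2 (hDsep (k N) (hx N) hxN1 hne))
    have : f N = f (N+1) := by rw [hfx, hfx, this, heq]
    exact hss.ne this
end

section
/- Let X be a regular topological space and A a maximal strongly disjoint family of nonempty regular open subsets of X (strongly disjoint meaning the closures of distinct members are disjoint). Then ⋃A is dense in X, and for regular open sets H₀, H₁ we have H₀ = H₁ iff H₀ ∩ ⋃A = H₁ ∩ ⋃A. -/
open Topology Filter

universe u

/-- Let `X` be a regular space and `𝒜` a maximal strongly disjoint family of
nonempty regular open subsets of `X`. Then `⋃𝒜` is dense in `X`, and two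
regular open sets are equal iff their intersections with `⋃𝒜` are equal. -/
theorem stmt9 {X : Type u} [TopologicalSpace X] [RegularSpace X]
    (𝒜 : Set (Set X))
    (hro : ∀ A ∈ 𝒜, A.Nonempty ∧ interior (closure A) = A)
    (hsd : ∀ A ∈ 𝒜, ∀ B ∈ 𝒜, A ≠ B → closure A ∩ closure B = ∅)
    (hmax : ∀ 𝒜' : Set (Set X), 𝒜 ⊆ 𝒜' →
      (∀ A ∈ 𝒜', A.Nonempty ∧ interior (closure A) = A) →
      (∀ A ∈ 𝒜', ∀ B ∈ 𝒜', A ≠ B → closure A ∩ closure B = ∅) → 𝒜' = 𝒜) :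
    Dense (⋃₀ 𝒜) ∧
      ∀ H₀ H₁ : Set X, interior (closure H₀) = H₀ → interior (closure H₁) = H₁ →
        (H₀ = H₁ ↔ H₀ ∩ ⋃₀ 𝒜 = H₁ ∩ ⋃₀ 𝒜) := by
  have hdense : Dense (⋃₀ 𝒜) := by
    by_contra h
    rw [Dense] at h
    push_neg at h
    obtain ⟨x, hx⟩ := h
    -- x has the open nbhd V := (closure ⋃₀𝒜)ᶜ
    have hV : (closure (⋃₀ 𝒜))ᶜ ∈ 𝓝 x :=
      (isClosed_closure.isOpen_compl).mem_nhds hx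
    obtain ⟨t, ht, htc, hts⟩ := exists_mem_nhds_isClosed_subset hV
    set W : Set X := interior t with hW
    have hxW : x ∈ W := mem_interior_iff_mem_nhds.2 ht
    set B : Set X := interior (closure W) with hB
    have hWB : W ⊆ B := isOpen_interior.subset_interior_closure
    have hxB : x ∈ B := hWB hxW
    have hclB : closure B ⊆ (closure (⋃₀ 𝒜))ᶜ := by
      calc closure B ⊆ closure (closure W) := closure_mono interior_subset
        _ = closure W := closure_closure
        _ ⊆ closure t := closure_mono interior_subset
        _ = t := htc.closure_eq
        _ ⊆ _ := hts
    have hBro : interior (closure B) = B := by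
      apply subset_antisymm
      · exact interior_mono (closure_mono interior_subset)
          |>.trans (by rw [closure_closure])
      · exact isOpen_interior.subset_interior_closure
    have hdisj : ∀ A ∈ 𝒜, closure B ∩ closure A = ∅ := by
      intro A hA
      have hAcl : closure A ⊆ closure (⋃₀ 𝒜) :=
        closure_mono (Set.subset_sUnion_of_mem hA)
      ext y
      simp only [Set.mem_inter_iff, Set.mem_empty_iff_false, iff_false, not_and]
      intro hyB hyA
      exact hclB hyB (hAcl hyA)
    have key : insert B 𝒜 = 𝒜 := by
      apply hmax
      · exact Set.subset_insert _ _
      · rintro A (rfl | hA)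
        · exact ⟨⟨x, hxB⟩, hBro⟩
        · exact hro A hA
      · rintro A (rfl | hA) C (rfl | hC) hne
        · exact absurd rfl hne
        · exact hdisj C hC
        · rw [Set.inter_comm]; exact hdisj A hA
        · exact hsd A hA C hC hne
    have hB𝒜 : B ∈ 𝒜 := key ▸ Set.mem_insert B 𝒜
    exact (hclB (subset_closure hxB))
      (subset_closure (Set.mem_sUnion_of_mem hxB hB𝒜))
  refine ⟨hdense, fun H₀ H₁ h₀ h₁ => ⟨fun h => by rw [h], fun h => ?_⟩⟩
  have key : ∀ H : Set X, interior (closure H) = H →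
      closure (H ∩ ⋃₀ 𝒜) = closure H := by
    intro H hH
    apply subset_antisymm (closure_mono Set.inter_subset_left)
    have hHo : IsOpen H := hH ▸ isOpen_interior
    have := hdense.open_subset_closure_inter hHo
    calc closure H ⊆ closure (closure (H ∩ ⋃₀ 𝒜)) := closure_mono this
      _ = _ := closure_closure
  have : closure H₀ = closure H₁ := by
    rw [← key H₀ h₀, ← key H₁ h₁, h]
  rw [← h₀, ← h₁, this]
end

section
/- Let X be a regular space, A a maximal strongly disjoint family of nonempty regular open ρ-homogeneous subsets of X, and for a regular open H let tr(H) = {A ∈ A : A ∩ H ≠ ∅}. Then for every regular open H, the number of regular open subsets of H satisfies ρ(H) ≥ 2^{|tr(H)|}. -/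
universe u

/-- `ρ(Y)` is the number of regular open subsets of the space `Y`. -/
noncomputable def rho (Y : Type u) [TopologicalSpace Y] : Cardinal.{u} :=
  Cardinal.mk {U : Set Y // interior (closure U) = U}

/-- The subspace `A ⊆ X` is `ρ`-homogeneous: every nonempty regular open subset
of the subspace `A` has as many regular open sets as `A` itself. -/
def RhoHomogeneous {X : Type u} [TopologicalSpace X] (A : Set X) : Prop :=
  ∀ B : Set A, B.Nonempty → interior (closure B) = B → rho B = rho A

/-- Let `X` be regular and `𝒜` a maximal strongly disjoint family of nonempty
regular open `ρ`-homogeneous subsets of `X`. Then for every regular open `H`,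
`ρ(H) ≥ 2^{|tr(H)|}` where `tr(H) = {A ∈ 𝒜 : A ∩ H ≠ ∅}`. -/
theorem stmt10 {X : Type u} [TopologicalSpace X] [RegularSpace X]
    (𝒜 : Set (Set X))
    (hro : ∀ A ∈ 𝒜, A.Nonempty ∧ interior (closure A) = A ∧ RhoHomogeneous A)
    (hsd : ∀ A ∈ 𝒜, ∀ B ∈ 𝒜, A ≠ B → closure A ∩ closure B = ∅)
    (hmax : ∀ 𝒜' : Set (Set X), 𝒜 ⊆ 𝒜' →
      (∀ A ∈ 𝒜', A.Nonempty ∧ interior (closure A) = A ∧ RhoHomogeneous A) →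
      (∀ A ∈ 𝒜', ∀ B ∈ 𝒜', A ≠ B → closure A ∩ closure B = ∅) → 𝒜' = 𝒜) :
    ∀ H : Set X, interior (closure H) = H →
      2 ^ Cardinal.mk {A : Set X // A ∈ 𝒜 ∧ (A ∩ H).Nonempty} ≤ rho H := by
  intro H hH
  set τ := {A : Set X // A ∈ 𝒜 ∧ (A ∩ H).Nonempty} with hτ
  rw [← Cardinal.mk_set (α := τ)]
  -- each member of 𝒜 is open
  have hAopen : ∀ A : τ, IsOpen (A : Set X) := fun A => by
    have h := (hro A.1 A.2.1).2.1
    rw [← h]; exact isOpen_interior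
  let W : Set τ → Set H := fun S => Subtype.val ⁻¹' (⋃ A ∈ S, (A : Set X))
  have hWopen : ∀ S, IsOpen (W S) := fun S =>
    (isOpen_iUnion fun A => isOpen_iUnion fun _ => hAopen A).preimage
      continuous_subtype_val
  have hreg : ∀ S, interior (closure (interior (closure (W S)))) =
      interior (closure (W S)) := by
    intro S
    have h1 : closure (interior (closure (W S))) = closure (W S) := by
      apply subset_antisymm
      · calc closure (interior (closure (W S))) ⊆ closure (closure (W S)) :=
              closure_mono interior_subset
          _ = closure (W S) := closure_closure
      · exact closure_mono ((hWopen S).subset_interior_iff.mpr subset_closure)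
    rw [h1]
  let f : Set τ → {U : Set H // interior (closure U) = U} := fun S =>
    ⟨interior (closure (W S)), hreg S⟩
  have key : ∀ (S : Set τ) (A : τ),
      A ∈ S ↔ ((Subtype.val ⁻¹' (A : Set X)) ∩ interior (closure (W S))).Nonempty := by
    intro S A
    constructor
    · intro hAS
      obtain ⟨x, hxA, hxH⟩ := A.2.2
      refine ⟨⟨x, hxH⟩, hxA, ?_⟩
      have hsub : Subtype.val ⁻¹' (A : Set X) ⊆ W S := by
        intro y hy
        exact Set.mem_preimage.mpr (Set.mem_biUnion hAS hy)
      have : Subtype.val ⁻¹' (A : Set X) ⊆ interior (closure (W S)) :=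
        ((hAopen A).preimage continuous_subtype_val).subset_interior_iff.mpr
          (hsub.trans subset_closure)
      exact this hxA
    · rintro ⟨x, hxA, hxU⟩
      by_contra hAS
      set V := (Subtype.val ⁻¹' (A : Set X)) ∩ interior (closure (W S)) with hV
      have hVopen : IsOpen V :=
        ((hAopen A).preimage continuous_subtype_val).inter isOpen_interior
      have hVW : V ∩ W S = ∅ := by
        ext y
        simp only [Set.mem_inter_iff, Set.mem_empty_iff_false, iff_false]
        rintro ⟨⟨hyA, _⟩, hyW⟩
        obtain ⟨B, hBS, hyB⟩ := Set.mem_iUnion₂.mp (Set.mem_preimage.mp hyW)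
        have hne : (A : Set X) ≠ (B : Set X) := by
          intro h
          exact hAS (by rwa [show A = B from Subtype.ext h])
        have := hsd A.1 A.2.1 B.1 B.2.1 hne
        have : (y : X) ∈ closure (A : Set X) ∩ closure (B : Set X) :=
          ⟨subset_closure hyA, subset_closure hyB⟩
        rw [hsd A.1 A.2.1 B.1 B.2.1 hne] at this
        exact this
      have hVcl : V ∩ closure (W S) = ∅ := by
        have h := hVopen.inter_closure (t := W S)
        rw [hVW, closure_empty] at h
        exact Set.subset_empty_iff.mp h
      have hxV : x ∈ V := ⟨hxA, hxU⟩
      have hxcl : x ∈ closure (W S) := interior_subset hxU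
      have : x ∈ V ∩ closure (W S) := ⟨hxV, hxcl⟩
      rw [hVcl] at this
      exact this
  have hinj : Function.Injective f := by
    intro S T hST
    have h : interior (closure (W S)) = interior (closure (W T)) :=
      congrArg Subtype.val hST
    ext A
    rw [key S A, key T A, h]
  exact Cardinal.mk_le_of_injective hinj
end

section
/- If X is a splendid space (regular, countably compact, locally countable, and ω-fair), then the family U of compact open subsets of X is cofinal in ([X]^ω, ⊆): every countable subset of X is contained in a compact open set; moreover U is locally small, i.e., for every countable Y ⊆ X the family {Y ∩ U : U ∈ U} is countable. -/
universe u

/-- A countable closed set is compact in a countably compact space. -/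
lemma aux_cpt {X : Type u} [TopologicalSpace X]
    (hcc : ∀ U : ℕ → Set X, (∀ n, IsOpen (U n)) → (⋃ n, U n) = Set.univ →
      ∃ t : Finset ℕ, (⋃ n ∈ t, U n) = Set.univ)
    {C : Set X} (hcount : C.Countable) (hclosed : IsClosed C) : IsCompact C := by
  rcases C.eq_empty_or_nonempty with rfl | hne
  · exact isCompact_empty
  obtain ⟨c, hc⟩ := hcount.exists_eq_range hne
  refine isCompact_of_finite_subcover fun {ι} U hUo hcov => ?_
  classical
  have hidx : ∀ n : ℕ, ∃ i : ι, c n ∈ U i := by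
    intro n
    have : c n ∈ C := hc ▸ Set.mem_range_self n
    simpa using hcov this
  choose idx hidxm using hidx
  set W : ℕ → Set X := fun n => Nat.rec Cᶜ (fun m _ => U (idx m)) n with hW
  have hWo : ∀ n, IsOpen (W n) := by
    intro n; cases n with
    | zero => exact hclosed.isOpen_compl
    | succ m => exact hUo (idx m)
  have hWu : (⋃ n, W n) = Set.univ := by
    ext x; simp only [Set.mem_iUnion, Set.mem_univ, iff_true]
    by_cases hx : x ∈ C
    · rw [hc] at hx; obtain ⟨n, rfl⟩ := hx
      exact ⟨n + 1, hidxm n⟩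
    · exact ⟨0, hx⟩
  obtain ⟨t, ht⟩ := hcc W hWo hWu
  refine ⟨(t.erase 0).image (fun n => idx (n - 1)), fun x hx => ?_⟩
  have : x ∈ ⋃ n ∈ t, W n := ht ▸ Set.mem_univ x
  obtain ⟨n, hn, hxn⟩ := Set.mem_iUnion₂.mp this
  cases n with
  | zero => exact absurd hx hxn
  | succ m =>
      refine Set.mem_iUnion₂.mpr ⟨idx m, ?_, hxn⟩
      exact Finset.mem_image.mpr ⟨m + 1, Finset.mem_erase.mpr ⟨Nat.succ_ne_zero m, hn⟩, rfl⟩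

/-- A countable compact Hausdorff space is second countable. -/
lemma aux_secCount (D : Type u) [TopologicalSpace D] [Countable D] [CompactSpace D]
    [T2Space D] : SecondCountableTopology D := by
  have hsep : ∀ q : D × D, ∃ f : C(D, ℝ), q.1 ≠ q.2 → (f q.1 = 0 ∧ f q.2 = 1) := by
    rintro ⟨a, b⟩
    by_cases hab : a ≠ b
    · obtain ⟨f, hf0, hf1, -⟩ := exists_continuous_zero_one_of_isClosed
        (isClosed_singleton (x := a)) (isClosed_singleton (x := b))
        (by simpa [Set.disjoint_singleton] using hab)
      exact ⟨f, fun _ => ⟨hf0 rfl, hf1 rfl⟩⟩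
    · exact ⟨0, fun h => absurd h (by simpa using hab)⟩
  choose g hg using hsep
  set F : D → (D × D) → ℝ := fun x q => g q x with hF
  have hFc : Continuous F := continuous_pi fun q => (g q).continuous
  have hFi : Function.Injective F := by
    intro x y hxy
    by_contra hne
    have h1 := congrFun hxy (x, y)
    obtain ⟨h0, h1'⟩ := hg (x, y) hne
    simp only [hF] at h1
    rw [h0, h1'] at h1
    exact one_ne_zero h1.symm
  exact (hFc.isClosedEmbedding hFi).isEmbedding.secondCountableTopology

/-- A compact second countable space has countably many clopen subsets. -/
lemma aux_countClopen (D : Type u) [TopologicalSpace D] [CompactSpace D]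
    [SecondCountableTopology D] : {W : Set D | IsClopen W}.Countable := by
  classical
  obtain ⟨b, hbc, -, hbasis⟩ := TopologicalSpace.exists_countable_basis D
  have key : {W : Set D | IsClopen W} ⊆
      (fun t : Set (Set D) => ⋃₀ t) '' {t | t.Finite ∧ t ⊆ b} := by
    intro W hW
    have hWcpt : IsCompact W := hW.isClosed.isCompact
    have hWeq : W = ⋃₀ {s ∈ b | s ⊆ W} := hbasis.open_eq_sUnion' hW.isOpen
    obtain ⟨t, ht⟩ := hWcpt.elim_finite_subcover
      (fun s : {s // s ∈ b ∧ s ⊆ W} => (s : Set D))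
      (fun s => hbasis.isOpen s.2.1)
      (by intro x hx
          rw [hWeq] at hx
          obtain ⟨s, hs, hxs⟩ := hx
          exact Set.mem_iUnion.mpr ⟨⟨s, hs.1, hs.2⟩, hxs⟩)
    refine ⟨↑(t.image (fun s : {s // s ∈ b ∧ s ⊆ W} => (s : Set D))), ⟨Finset.finite_toSet _,
      by intro s hs; simp only [Finset.coe_image, Set.mem_image] at hs
         obtain ⟨u, -, rfl⟩ := hs; exact u.2.1⟩, ?_⟩
    apply le_antisymm
    · intro x hx
      simp only [Set.mem_sUnion, Finset.coe_image, Set.mem_image, Finset.mem_coe] at hx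
      obtain ⟨s, ⟨u, -, rfl⟩, hxs⟩ := hx
      exact u.2.2 hxs
    · intro x hx
      obtain ⟨u, hu⟩ := Set.mem_iUnion₂.mp (ht hx)
      refine ⟨(u : Set D), ?_, hu.2⟩
      simp only [Finset.coe_image, Set.mem_image, Finset.mem_coe]
      exact ⟨u, hu.1, rfl⟩
  exact ((Set.countable_setOf_finite_subset hbc).image _).mono key

lemma aux_Ioo_not_countable : ¬ (Set.Ioo (0:ℝ) 1).Countable := by
  intro h
  have h1 : Cardinal.mk (Set.Ioo (0:ℝ) 1) = Cardinal.continuum := Cardinal.mk_Ioo_real one_pos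
  have h2 : Cardinal.mk (Set.Ioo (0:ℝ) 1) ≤ Cardinal.aleph0 := h.le_aleph0
  rw [h1] at h2
  exact absurd h2 (not_le.mpr Cardinal.aleph0_lt_continuum)

/-- Every point of a countable open set has a compact open neighborhood. -/
lemma aux_nbhd {X : Type u} [TopologicalSpace X] [T1Space X] [RegularSpace X]
    (hcc : ∀ U : ℕ → Set X, (∀ n, IsOpen (U n)) → (⋃ n, U n) = Set.univ →
      ∃ t : Finset ℕ, (⋃ n ∈ t, U n) = Set.univ)
    {V : Set X} (hVo : IsOpen V) (hCc : (closure V).Countable) {p : X} (hp : p ∈ V) :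
    ∃ K : Set X, IsCompact K ∧ IsOpen K ∧ p ∈ K := by
  set C := closure V with hC
  have hVC : V ⊆ C := subset_closure
  have hCcpt : IsCompact C := aux_cpt hcc hCc isClosed_closure
  haveI : CompactSpace ↥C := isCompact_iff_compactSpace.mp hCcpt
  haveI : Countable ↥C := hCc.to_subtype
  set p' : ↥C := ⟨p, hVC hp⟩ with hp'
  obtain ⟨f, hf0, hf1, -⟩ := exists_continuous_zero_one_of_isClosed
    (isClosed_singleton (x := p'))
    ((hVo.preimage continuous_subtype_val).isClosed_compl)
    (Set.disjoint_singleton_left.mpr (by simp [hp', hp]))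
  have hrange : (Set.range f).Countable := Set.countable_range f
  have hr : ∃ r ∈ Set.Ioo (0:ℝ) 1, r ∉ Set.range f := by
    by_contra h
    push_neg at h
    exact aux_Ioo_not_countable (hrange.mono h)
  obtain ⟨r, ⟨hr0, hr1⟩, hrr⟩ := hr
  set Ksub : Set ↥C := f ⁻¹' Set.Iio r with hKsub
  have hKo : IsOpen Ksub := f.continuous.isOpen_preimage _ isOpen_Iio
  have hKeq : Ksub = f ⁻¹' Set.Iic r := by
    ext z
    simp only [hKsub, Set.mem_preimage, Set.mem_Iio, Set.mem_Iic]
    constructor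
    · exact le_of_lt
    · intro h
      rcases lt_or_eq_of_le h with h' | h'
      · exact h'
      · exact absurd ⟨z, h'⟩ hrr
  have hKcl : IsClosed Ksub := by
    rw [hKeq]; exact IsClosed.preimage f.continuous isClosed_Iic
  have hKcpt : IsCompact Ksub := hKcl.isCompact
  have hKV : Subtype.val '' Ksub ⊆ V := by
    rintro x ⟨z, hz, rfl⟩
    by_contra hzV
    have : f z = 1 := hf1 (by simpa using hzV)
    rw [hKsub, Set.mem_preimage, Set.mem_Iio, this] at hz
    exact absurd (hz.trans hr1) (lt_irrefl 1)
  obtain ⟨O, hOo, hOpre⟩ := isOpen_induced_iff.mp hKo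
  have himg : Subtype.val '' Ksub = O ∩ V := by
    apply le_antisymm
    · intro x hx
      refine ⟨?_, hKV hx⟩
      obtain ⟨z, hz, rfl⟩ := hx
      rw [← hOpre] at hz
      exact hz
    · rintro x ⟨hxO, hxV⟩
      exact ⟨⟨x, hVC hxV⟩, by rw [← hOpre]; exact hxO, rfl⟩
  refine ⟨Subtype.val '' Ksub, hKcpt.image continuous_subtype_val, ?_, ?_⟩
  · rw [himg]; exact hOo.inter hVo
  · refine ⟨p', ?_, rfl⟩
    rw [hKsub, Set.mem_preimage, Set.mem_Iio]
    have : f p' = 0 := hf0 rfl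
    rw [this]; exact hr0

/-- If `X` is a splendid space (regular, countably compact, locally countable and
`ω`-fair), then the family of compact open subsets of `X` is cofinal in
`([X]^ω, ⊆)` and locally small. -/
theorem stmt11 {X : Type u} [TopologicalSpace X] [T1Space X] [RegularSpace X]
    (hcc : ∀ U : ℕ → Set X, (∀ n, IsOpen (U n)) → (⋃ n, U n) = Set.univ →
      ∃ t : Finset ℕ, (⋃ n ∈ t, U n) = Set.univ)
    (hlc : ∀ p : X, ∃ U ∈ nhds p, U.Countable)
    (hfair : ∀ Y : Set X, Y.Countable → (closure Y).Countable) :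
    (∀ Y : Set X, Y.Countable → ∃ U : Set X, IsCompact U ∧ IsOpen U ∧ Y ⊆ U) ∧
    (∀ Y : Set X, Y.Countable →
      {Z : Set X | ∃ U : Set X, IsCompact U ∧ IsOpen U ∧ Z = Y ∩ U}.Countable) := by
  -- every point has a compact open neighborhood
  have hnbhd : ∀ x : X, ∃ K : Set X, IsCompact K ∧ IsOpen K ∧ x ∈ K := by
    intro x
    obtain ⟨U, hU, hUc⟩ := hlc x
    have hxi : x ∈ interior U := mem_interior_iff_mem_nhds.mpr hU
    exact aux_nbhd hcc isOpen_interior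
      (hfair _ (hUc.mono interior_subset)) hxi
  choose K hKcpt hKo hKmem using hnbhd
  constructor
  · intro Y hY
    have hCcpt : IsCompact (closure Y) := aux_cpt hcc (hfair Y hY) isClosed_closure
    obtain ⟨t, ht⟩ := hCcpt.elim_finite_subcover K hKo
      (fun x _ => Set.mem_iUnion.mpr ⟨x, hKmem x⟩)
    refine ⟨⋃ x ∈ t, K x, t.isCompact_biUnion (fun x _ => hKcpt x),
      isOpen_biUnion (fun x _ => hKo x), subset_closure.trans ht⟩
  · intro Y hY
    set C := closure Y with hC
    have hYC : Y ⊆ C := subset_closure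
    have hCcount : C.Countable := hfair Y hY
    have hCcpt : IsCompact C := aux_cpt hcc hCcount isClosed_closure
    haveI : CompactSpace ↥C := isCompact_iff_compactSpace.mp hCcpt
    haveI : Countable ↥C := hCcount.to_subtype
    haveI : SecondCountableTopology ↥C := aux_secCount ↥C
    have hclop : {W : Set ↥C | IsClopen W}.Countable := aux_countClopen ↥C
    have key : {Z : Set X | ∃ U : Set X, IsCompact U ∧ IsOpen U ∧ Z = Y ∩ U} ⊆
        (fun W : Set ↥C => Y ∩ (Subtype.val '' W)) '' {W : Set ↥C | IsClopen W} := by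
      rintro Z ⟨U, hUcpt, hUo, rfl⟩
      refine ⟨Subtype.val ⁻¹' U, ⟨?_, hUo.preimage continuous_subtype_val⟩, ?_⟩
      · -- closed: preimage of the closed set U ∩ C
        have h1 : IsCompact (U ∩ C) := hUcpt.inter_right isClosed_closure
        have h2 : IsClosed (U ∩ C) := h1.isClosed
        have h3 : (Subtype.val ⁻¹' U : Set ↥C) = Subtype.val ⁻¹' (U ∩ C) := by
          ext z; simp [z.2]
        rw [h3]
        exact h2.preimage continuous_subtype_val
      · have him : (Subtype.val '' (Subtype.val ⁻¹' U : Set ↥C)) = C ∩ U :=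
          Subtype.image_preimage_coe C U
        show Y ∩ (Subtype.val '' (Subtype.val ⁻¹' U : Set ↥C)) = Y ∩ U
        rw [him]
        ext x
        constructor
        · rintro ⟨hxY, -, hxU⟩; exact ⟨hxY, hxU⟩
        · rintro ⟨hxY, hxU⟩; exact ⟨hxY, hYC hxY, hxU⟩
    exact ((hclop.image _).mono key)
end

section
/- Every countable compact Hausdorff topological space has only countably many open subsets that are compact. -/
universe u

/-- Every countable compact Hausdorff space has only countably many
compact open subsets. -/
theorem stmt12 {X : Type u} [TopologicalSpace X] [CompactSpace X] [T2Space X]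
    [Countable X] :
    {U : Set X | IsOpen U ∧ IsCompact U}.Countable := by
  classical
  rcases isEmpty_or_nonempty X with hX | hX
  · exact (Set.toFinite _).countable
  obtain ⟨f, hf⟩ := exists_surjective_nat X
  -- choose separating open sets
  have h : ∀ x : X, ∀ n : ℕ, ∃ V : Set X, IsOpen V ∧ x ∈ V ∧ (f n ≠ x → f n ∉ closure V) := by
    intro x n
    by_cases hxn : f n = x
    · exact ⟨Set.univ, isOpen_univ, trivial, fun h => absurd hxn h⟩
    · obtain ⟨A, B, hA, hB, hxA, hnB, hAB⟩ := t2_separation (Ne.symm hxn)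
      exact ⟨A, hA, hxA, fun _ hcl => (hAB.closure_left hB).ne_of_mem hcl hnB rfl⟩
  choose U hUo hUx hUc using h
  set B : X → ℕ → Set X := fun x n => ⋂ i ∈ Finset.range (n + 1), U x i with hB
  have hBo : ∀ x n, IsOpen (B x n) := fun x n =>
    isOpen_biInter_finset fun i _ => hUo x i
  have hBx : ∀ x n, x ∈ B x n := fun x n =>
    Set.mem_biInter fun i _ => hUx x i
  -- B x n form a neighborhood basis at x
  have key : ∀ x : X, ∀ W : Set X, IsOpen W → x ∈ W → ∃ n, B x n ⊆ W := by
    intro x W hW hxW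
    set K : ℕ → Set X := fun n => ⋂ i ∈ Finset.range (n + 1), closure (U x i) with hK
    have hKc : ∀ n, IsClosed (K n) := fun n =>
      isClosed_biInter fun i _ => isClosed_closure
    have hKmono : ∀ {m n : ℕ}, m ≤ n → K n ⊆ K m := by
      intro m n hmn
      exact Set.biInter_subset_biInter_left (Finset.range_subset_range.mpr (by omega))
    have hKW : (Set.univ ∩ ⋂ n, K n ∩ Wᶜ) = ∅ := by
      rw [Set.univ_inter]
      ext z
      simp only [Set.mem_iInter, Set.mem_empty_iff_false, iff_false, not_forall,
        Set.mem_inter_iff, Set.mem_compl_iff]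
      by_cases hz : z = x
      · exact ⟨0, fun hc => (hc.2 (hz ▸ hxW))⟩
      · obtain ⟨m, hm⟩ := hf z
        refine ⟨m, fun hc => ?_⟩
        have hzK : z ∈ K m := hc.1
        have : z ∈ closure (U x m) :=
          Set.mem_iInter₂.mp hzK m (Finset.mem_range.mpr (Nat.lt_succ_self m))
        exact hUc x m (hm ▸ hz) (hm ▸ this)
      
    obtain ⟨n, hn⟩ := CompactSpace.isCompact_univ.elim_directed_family_closed
      (fun n => K n ∩ Wᶜ) (fun n => (hKc n).inter hW.isClosed_compl) hKW
      (by
        intro a b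
        exact ⟨max a b, Set.inter_subset_inter_left _ (hKmono (le_max_left a b)),
          Set.inter_subset_inter_left _ (hKmono (le_max_right a b))⟩)
    refine ⟨n, fun z hz => ?_⟩
    have hzK : z ∈ K n := by
      refine Set.mem_biInter fun i hi => subset_closure ?_
      exact Set.mem_iInter₂.mp hz i hi
    by_contra hzW
    have : z ∈ Set.univ ∩ (K n ∩ Wᶜ) := ⟨trivial, hzK, hzW⟩
    rw [hn] at this
    exact this
  -- every compact open set is a finite union of the B x n
  set F : Finset (X × ℕ) → Set X := fun t => ⋃ p ∈ t, B p.1 p.2 with hF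
  refine Set.Countable.mono ?_ (Set.countable_range F)
  rintro V ⟨hVo, hVc⟩
  set C : X × ℕ → Set X := fun p => if B p.1 p.2 ⊆ V then B p.1 p.2 else ∅ with hC
  have hCo : ∀ p, IsOpen (C p) := by
    intro p
    by_cases hp : B p.1 p.2 ⊆ V
    · simpa [hC, hp] using hBo p.1 p.2
    · simp [hC, hp]
  have hcov : V ⊆ ⋃ p, C p := by
    intro z hz
    obtain ⟨n, hn⟩ := key z V hVo hz
    exact Set.mem_iUnion.mpr ⟨(z, n), by simp [hC, hn, hBx z n]⟩
  obtain ⟨t, ht⟩ := hVc.elim_finite_subcover C hCo hcov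
  refine ⟨t.filter (fun p => B p.1 p.2 ⊆ V), ?_⟩
  apply subset_antisymm
  · intro z hz
    obtain ⟨p, hpf, hzB⟩ := Set.mem_iUnion₂.mp hz
    exact (Finset.mem_filter.mp hpf).2 hzB
  · intro z hz
    obtain ⟨p, hpt, hzp⟩ := Set.mem_iUnion₂.mp (ht hz)
    by_cases hp : B p.1 p.2 ⊆ V
    · exact Set.mem_iUnion₂.mpr ⟨p, Finset.mem_filter.mpr ⟨hpt, hp⟩, by simpa [hC, hp] using hzp⟩
    · simp [hC, hp] at hzp
end

section
/- Let K be a countable family of infinite subsets of a countable infinite set a such that no finite subfamily of K covers a modulo a finite set. Then there exists an infinite h ⊆ a such that h ∩ K is finite for every K ∈ K. -/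
/-!
Enumerate the family as `f 0, f 1, …`. The sets `a \ (f 0 ∪ ⋯ ∪ f n)` form a decreasing
sequence of infinite sets, so one can pick distinct points `x n` with `x n` in the `n`-th of
them. Then `h = {x n}` is infinite, lies in `a`, and meets `f m` only in points `x n` with `n < m`.
-/

universe u

open Set Function

namespace Set

variable {α : Type*} {S : ℕ → Set α}

theorem exists_injective_forall_mem_of_antitone (hS : Antitone S)
    (hinf : ∀ n, (S n).Infinite) : ∃ x : ℕ → α, Injective x ∧ ∀ n, x n ∈ S n := by
  classical
  -- Choose points together with strictly increasing indices; antitonicity moves them back to `S n`.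
  obtain ⟨p, hpS, hp⟩ := exists_seq_of_forall_finset_exists (fun p : α × ℕ => p.1 ∈ S p.2)
    (fun p q => p.1 ≠ q.1 ∧ p.2 < q.2) fun s _ => by
      obtain ⟨y, hyS, hys⟩ :=
        ((hinf (s.sup Prod.snd + 1)).sdiff (s.image Prod.fst).finite_toSet).nonempty
      refine ⟨(y, s.sup Prod.snd + 1), hyS, fun q hq => ⟨?_, Nat.lt_succ_of_le (s.le_sup hq)⟩⟩
      rintro rfl
      exact hys (Finset.mem_image_of_mem _ hq)
  have hidx : StrictMono fun n => (p n).2 := fun m n hmn => (hp m n hmn).2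
  exact ⟨fun n => (p n).1, Injective.of_lt_imp_ne fun m n hmn => (hp m n hmn).1,
    fun n => hS (hidx.id_le n) (hpS n)⟩

theorem exists_infinite_subset_forall_diff_finite_of_antitone (hS : Antitone S)
    (hinf : ∀ n, (S n).Infinite) : ∃ h ⊆ S 0, h.Infinite ∧ ∀ n, (h \ S n).Finite := by
  obtain ⟨x, hinj, hxS⟩ := exists_injective_forall_mem_of_antitone hS hinf
  refine ⟨range x, range_subset_iff.2 fun n => hS n.zero_le (hxS n),
    infinite_range_of_injective hinj, fun n => ((finite_Iio n).image x).subset ?_⟩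
  rintro _ ⟨⟨m, rfl⟩, hm⟩
  exact ⟨m, lt_of_not_ge fun hnm => hm (hS hnm (hxS m)), rfl⟩

end Set

theorem stmt19_general {α : Type u} (a : Set α) (hai : a.Infinite)
    (K : Set (Set α)) (hKc : K.Countable)
    (hncov : ∀ K' : Finset (Set α), ↑K' ⊆ K → (a \ ⋃₀ ↑K').Infinite) :
    ∃ h : Set α, h ⊆ a ∧ h.Infinite ∧ ∀ k ∈ K, (h ∩ k).Finite := by
  classical
  rcases K.eq_empty_or_nonempty with rfl | hKne
  · exact ⟨a, subset_rfl, hai, fun _ hk => hk.elim⟩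
  obtain ⟨f, rfl⟩ := hKc.exists_eq_range hKne
  let F : ℕ → Finset (Set α) := fun n => (Finset.range (n + 1)).image f
  have hF : Monotone F := fun m n hmn =>
    Finset.image_subset_image (Finset.range_subset_range.2 (by omega))
  have hmemF : ∀ m, f m ∈ F m := fun m => Finset.mem_image_of_mem f (Finset.self_mem_range_succ m)
  obtain ⟨h, hsub, hinf, hfin⟩ := exists_infinite_subset_forall_diff_finite_of_antitone
    (S := fun n => a \ ⋃₀ ↑(F n))
    (fun m n hmn => sdiff_subset_sdiff_right (sUnion_mono (Finset.coe_subset.2 (hF hmn))))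
    (fun n => hncov (F n) (by simp [F, Finset.coe_image, image_subset_iff]))
  refine ⟨h, hsub.trans sdiff_subset, hinf, ?_⟩
  rintro _ ⟨m, rfl⟩
  exact (hfin m).subset fun y ⟨hyh, hym⟩ => ⟨hyh, fun hy => hy.2 ⟨f m, hmemF m, hym⟩⟩

/-- Let `K` be a countable family of infinite subsets of a countably infinite
set `a` such that no finite subfamily of `K` covers `a` modulo a finite set.
Then there is an infinite `h ⊆ a` meeting each member of `K` in a finite set. -/
theorem stmt19 {α : Type u} (a : Set α) (hac : a.Countable) (hai : a.Infinite)
    (K : Set (Set α)) (hKc : K.Countable)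
    (hKmem : ∀ k ∈ K, k ⊆ a ∧ k.Infinite)
    (hncov : ∀ K' : Finset (Set α), ↑K' ⊆ K → (a \ ⋃₀ ↑K').Infinite) :
    ∃ h : Set α, h ⊆ a ∧ h.Infinite ∧ ∀ k ∈ K, (h ∩ k).Finite :=
  stmt19_general a hai K hKc hncov
end
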